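/- Let β be an ideal Skolem function, let ω : (ℕ → Bool) → ℕ, and let ε_s be the selection functions defined by: ε_s p = 0 if Depth_{p(0)+1}(T^β_s) → Depth_{p(0)}(T^β_{s*0}), and ε_s p = 1 otherwise. For α : ℕ → Bool define q^ω α = ω α − k − 1 where k is the least k < ω α such that Depth_{ωα−k}(T^β_{α|k}) holds but Depth_{ωα−k−1}(T^β_{α|(k+1)}) fails, and q^ω α = 0 if no such k exists. Let E be an explicitly controlled product of the ε_s for ω and set α = E ⟨⟩ q^ω. Then T^β(α|ωα), i.e. the initial segment of α of length ω α is a branch of T^β. -/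

import Mathlib

/-- The Erdős–Rado relation `≺` on ℕ determined by the symmetric colouring `c`:
`j ≺ i` iff `j < i` and `c k i = c k j` for every `k ≺ j`. -/
def ERprec (c : ℕ → ℕ → Bool) (j i : ℕ) : Prop :=
  ∃ _ : j < i, ∀ k, ERprec c k j → c k i = c k j
termination_by i
decreasing_by omega

/-- `Tp c s k` is the predicate `T'(s, k)`: there is `k'` with `|s| ≤ k' ≤ k` such that
`s` is the characteristic function (with `0 = false`) of the `≺`-predecessors of `k'`
below `|s|`. -/
def Tp (c : ℕ → ℕ → Bool) (s : List Bool) (k : ℕ) : Prop :=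
  ∃ k', s.length ≤ k' ∧ k' ≤ k ∧ ∀ i (h : i < s.length), (s[i]'h = false ↔ ERprec c i k')

/-- `TB c β s` is `T^β(s) := T'(s, β |s|)`. -/
def TB (c : ℕ → ℕ → Bool) (β : ℕ → ℕ) (s : List Bool) : Prop :=
  Tp c s (β s.length)

/-- `β` is an ideal Skolem function for `T` if `T'(s,k) → T'(s, β |s|)` for all `s`, `k`. -/
def IdealSkolem (c : ℕ → ℕ → Bool) (β : ℕ → ℕ) : Prop :=
  ∀ (s : List Bool) (k : ℕ), Tp c s k → Tp c s (β s.length)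

/-- `Depth c β s n` is `Depth_n(T^β_s)`: the subtree of `T^β` at `s` has a branch of
length `n`. -/
def Depth (c : ℕ → ℕ → Bool) (β : ℕ → ℕ) (s : List Bool) (n : ℕ) : Prop :=
  ∃ t : List Bool, t.length = n ∧ TB c β (s ++ t)

/-- Prepend a single element to an infinite sequence. -/
def consSeq {X : Type*} (x : X) (α : ℕ → X) : ℕ → X
  | 0 => x
  | n + 1 => α n

/-- The canonical infinite extension `ŝ` of a finite sequence `s` by the distinguished
element `z`. -/
def extSeq {X : Type*} (z : X) (s : List X) : ℕ → X :=
  fun n => s.getD n z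

/-- Concatenation `t * α` of a finite sequence `t` with an infinite sequence `α`. -/
def prependSeq {X : Type*} (t : List X) (α : ℕ → X) : ℕ → X :=
  fun n => t.getD n (α (n - t.length))

/-- The initial segment `α|n` of the infinite sequence `α`, of length `n`. -/
def initSeg {X : Type*} (α : ℕ → X) (n : ℕ) : List X :=
  (List.range n).map α

/-- `IsECP z ε ω E` says that `E` is an explicitly controlled product of the selection
functions `ε_s : (X → R) → X` for the control functional `ω`:  `E s q = 0` (the constant
`z` sequence) if `ω ŝ < |s|`, and otherwise `E s q = a * E (s * a) q_a` where
`a = ε_s (fun x => q_x (E (s * x) q_x))` and `q_x α = q (x * α)`. -/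
def IsECP {X R : Type*} (z : X) (ε : List X → (X → R) → X) (ω : (ℕ → X) → ℕ)
    (E : List X → ((ℕ → X) → R) → ℕ → X) : Prop :=
  ∀ (s : List X) (q : (ℕ → X) → R),
    (ω (extSeq z s) < s.length → E s q = fun _ => z) ∧
    (¬ ω (extSeq z s) < s.length →
      E s q =
        (let a := ε s (fun x => q (consSeq x (E (s ++ [x]) (fun α => q (consSeq x α)))));
         consSeq a (E (s ++ [a]) (fun α => q (consSeq a α)))))

open Classical in
/-- The selection function interpreting weak König's lemma on `T^β`. -/
noncomputable def wklSel (c : ℕ → ℕ → Bool) (β : ℕ → ℕ) (s : List Bool)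
    (p : Bool → ℕ) : Bool :=
  if Depth c β s (p false + 1) → Depth c β (s ++ [false]) (p false) then false
  else true

open Classical in
/-- The outcome function `q^ω`: `q^ω α = ω α - k - 1` for the least `k < ω α` such that
`Depth_(ω α - k) (T^β_(α|k))` holds but `Depth_(ω α - k - 1) (T^β_(α|(k+1)))` fails, and
`q^ω α = 0` if there is no such `k`. -/
noncomputable def qOmega (c : ℕ → ℕ → Bool) (β : ℕ → ℕ) (ω : (ℕ → Bool) → ℕ)
    (α : ℕ → Bool) : ℕ :=
  if h : ∃ k, k < ω α ∧ Depth c β (initSeg α k) (ω α - k) ∧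
      ¬ Depth c β (initSeg α (k + 1)) (ω α - k - 1)
  then ω α - Nat.find h - 1 else 0


section Helpers

lemma prependSeq_nil {X : Type*} (γ : ℕ → X) : prependSeq [] γ = γ := by
  funext n; simp [prependSeq]

lemma prependSeq_const {X : Type*} (s : List X) (z : X) :
    prependSeq s (fun _ => z) = extSeq z s := rfl

lemma prependSeq_concat {X : Type*} (s : List X) (a : X) (γ : ℕ → X) :
    prependSeq (s ++ [a]) γ = prependSeq s (consSeq a γ) := by
  funext n
  unfold prependSeq
  rcases Nat.lt_trichotomy n s.length with h | h | h
  · rw [List.getD_eq_getElem _ _ (by simp; omega), List.getD_eq_getElem _ _ h,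
      List.getElem_append_left h]
  · subst h
    rw [List.getD_eq_getElem _ _ (by simp), List.getD_eq_default _ _ le_rfl,
      List.getElem_concat_length rfl]
    simp [consSeq]
  · rw [List.getD_eq_default _ _ (by simp; omega), List.getD_eq_default _ _ (by omega)]
    have h2 : n - (s ++ [a]).length = n - s.length - 1 := by simp; omega
    have h3 : n - s.length = (n - s.length - 1) + 1 := by omega
    rw [h2, h3]
    rfl

lemma prependSeq_concat_apply_len {X : Type*} (s : List X) (a : X) (γ : ℕ → X) :
    prependSeq (s ++ [a]) γ s.length = a := by
  unfold prependSeq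
  rw [List.getD_eq_getElem _ _ (by simp), List.getElem_concat_length rfl]

lemma initSeg_length {X : Type*} (α : ℕ → X) (n : ℕ) : (initSeg α n).length = n := by
  simp [initSeg]

lemma initSeg_zero {X : Type*} (α : ℕ → X) : initSeg α 0 = [] := rfl

lemma initSeg_succ {X : Type*} (α : ℕ → X) (n : ℕ) :
    initSeg α (n + 1) = initSeg α n ++ [α n] := by
  simp [initSeg, List.range_succ]

lemma Tp_prefix (c : ℕ → ℕ → Bool) (s t : List Bool) (k : ℕ) :
    Tp c (s ++ t) k → Tp c s k := by
  rintro ⟨k', h1, h2, h3⟩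
  refine ⟨k', le_trans (by simp) h1, h2, fun i h => ?_⟩
  have h' : i < (s ++ t).length := by simp; omega
  have := h3 i h'
  rwa [List.getElem_append_left h] at this

lemma TB_prefix {c : ℕ → ℕ → Bool} {β : ℕ → ℕ} (hβ : IdealSkolem c β) (s t : List Bool) :
    TB c β (s ++ t) → TB c β s :=
  fun h => hβ s _ (Tp_prefix c s t _ h)

lemma depth_mono {c : ℕ → ℕ → Bool} {β : ℕ → ℕ} (hβ : IdealSkolem c β) {s : List Bool}
    {m m' : ℕ} (h : Depth c β s m) (hm : m' ≤ m) : Depth c β s m' := by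
  obtain ⟨t, ht, htb⟩ := h
  refine ⟨t.take m', by rw [List.length_take, ht]; omega, ?_⟩
  have he : s ++ t = (s ++ t.take m') ++ t.drop m' := by
    rw [List.append_assoc, List.take_append_drop]
  rw [he] at htb
  exact TB_prefix hβ _ _ htb

open Classical in
lemma depth_nil {c : ℕ → ℕ → Bool} {β : ℕ → ℕ} (hβ : IdealSkolem c β) (n : ℕ) :
    Depth c β [] n := by
  refine ⟨(List.range n).map (fun i => if ERprec c i n then false else true), by simp, ?_⟩
  rw [List.nil_append]
  apply hβ _ n
  refine ⟨n, by simp, le_rfl, ?_⟩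
  intro i h
  have hi : i < n := by simpa using h
  simp only [List.getElem_map, List.getElem_range]
  by_cases hp : ERprec c i n
  · simp [hp]
  · simp [hp]

lemma depth_succ_child {c : ℕ → ℕ → Bool} {β : ℕ → ℕ} {s : List Bool} {m : ℕ}
    (h : Depth c β s (m + 1)) :
    Depth c β (s ++ [false]) m ∨ Depth c β (s ++ [true]) m := by
  obtain ⟨t, ht, htb⟩ := h
  cases t with
  | nil => simp at ht
  | cons b t' =>
    have ht' : t'.length = m := by simpa using ht
    rw [show s ++ b :: t' = (s ++ [b]) ++ t' by simp] at htb
    cases b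
    · exact Or.inl ⟨t', ht', htb⟩
    · exact Or.inr ⟨t', ht', htb⟩


def Qf {X R : Type*} (q : (ℕ → X) → R) (s : List X) : (ℕ → X) → R :=
  fun γ => q (prependSeq s γ)
end Helpers

/-- Interpretation of weak König's lemma by the explicitly controlled product: if `E`
is an explicitly controlled product of the selection functions `wklSel` for `ω`, then
`α = E ⟨⟩ q^ω` satisfies `T^β (α|ω α)`. -/
theorem ecp_interprets_wkl (c : ℕ → ℕ → Bool) (hc : ∀ i j, c i j = c j i)
    (β : ℕ → ℕ) (hβ : IdealSkolem c β) (ω : (ℕ → Bool) → ℕ)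
    (E : List Bool → ((ℕ → Bool) → ℕ) → ℕ → Bool)
    (hE : IsECP false (wklSel c β) ω E) :
    TB c β (initSeg (E [] (qOmega c β ω)) (ω (E [] (qOmega c β ω)))) := by
  classical
  set q : (ℕ → Bool) → ℕ := qOmega c β ω with hqdef
  set α : ℕ → Bool := E [] q with hαdef
  have hQnil : Qf q ([] : List Bool) = q := by
    funext γ; show q _ = q γ; rw [prependSeq_nil]
  -- one step of unfolding of the product
  have unfold1 : ∀ j : ℕ,
      α = prependSeq (initSeg α j) (E (initSeg α j) (Qf q (initSeg α j))) →
      ¬ ω (extSeq false (initSeg α j)) < j →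
      ∃ p : Bool → ℕ, α j = wklSel c β (initSeg α j) p ∧ p (α j) = q α ∧
        α = prependSeq (initSeg α (j + 1)) (E (initSeg α (j + 1)) (Qf q (initSeg α (j + 1)))) := by
    intro j hα hstop
    set s := initSeg α j with hs
    have hlen : s.length = j := initSeg_length α j
    have h2 := (hE s (Qf q s)).2 (by rw [hlen]; exact hstop)
    have hQapp : ∀ (x : Bool) (γ : ℕ → Bool),
        Qf q s (consSeq x γ) = Qf q (s ++ [x]) γ := by
      intro x γ
      show q (prependSeq s (consSeq x γ)) = q (prependSeq (s ++ [x]) γ)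
      rw [prependSeq_concat]
    simp only [hQapp] at h2
    rw [h2, ← prependSeq_concat] at hα
    have hαj : α j = wklSel c β s
        (fun x => Qf q (s ++ [x]) (E (s ++ [x]) (Qf q (s ++ [x])))) := by
      conv_lhs => rw [hα]
      rw [← hlen]
      exact prependSeq_concat_apply_len _ _ _
    refine ⟨fun x => Qf q (s ++ [x]) (E (s ++ [x]) (Qf q (s ++ [x]))), hαj, ?_, ?_⟩
    · rw [hαj]
      exact (congrArg q hα).symm
    · rw [initSeg_succ, ← hs, hαj]
      exact hα
  have tail : ∀ j : ℕ, (∀ i, i < j → ¬ ω (extSeq false (initSeg α i)) < i) →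
      α = prependSeq (initSeg α j) (E (initSeg α j) (Qf q (initSeg α j))) := by
    intro j
    induction j with
    | zero =>
      intro _
      rw [initSeg_zero, hQnil, prependSeq_nil]
    | succ j ih =>
      intro h
      obtain ⟨p, _, _, h3⟩ :=
        unfold1 j (ih fun i hi => h i (Nat.lt_succ_of_lt hi)) (h j (Nat.lt_succ_self j))
      exact h3
  have stopped : ∀ J : ℕ, (∀ i, i < J → ¬ ω (extSeq false (initSeg α i)) < i) →
      ω (extSeq false (initSeg α J)) < J → ω α < J := by
    intro J hact hstop
    have htail := tail J hact
    have h1 := (hE (initSeg α J) (Qf q (initSeg α J))).1 (by rwa [initSeg_length])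
    rw [h1, prependSeq_const] at htail
    have : ω α = ω (extSeq false (initSeg α J)) := by rw [← htail]
    omega
  have hactive : ∀ i, i < ω α → ¬ ω (extSeq false (initSeg α i)) < i := by
    intro i
    induction i using Nat.strong_induction_on with
    | _ i ih =>
      intro hi hstop
      have := stopped i (fun i' hi' => ih i' hi' (hi'.trans hi)) hstop
      omega
  by_cases hex : ∃ k, k < ω α ∧ Depth c β (initSeg α k) (ω α - k) ∧
      ¬ Depth c β (initSeg α (k + 1)) (ω α - k - 1)
  case neg =>
    have hinv : ∀ j, j ≤ ω α → Depth c β (initSeg α j) (ω α - j) := by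
      intro j
      induction j with
      | zero =>
        intro _
        rw [initSeg_zero]
        simpa using depth_nil hβ (ω α)
      | succ j ih =>
        intro hj
        have h1 := ih (by omega)
        by_contra h2
        rw [← Nat.sub_sub] at h2
        exact hex ⟨j, by omega, h1, h2⟩
    have hfin := hinv (ω α) le_rfl
    rw [Nat.sub_self] at hfin
    obtain ⟨t, ht0, htb⟩ := hfin
    rw [List.length_eq_zero_iff] at ht0
    subst ht0
    rwa [List.append_nil] at htb
  case pos =>
    have hqα : q α = ω α - Nat.find hex - 1 := by
      rw [hqdef]
      show qOmega c β ω α = _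
      unfold qOmega
      rw [dif_pos hex]
    obtain ⟨hk0, hD, hN⟩ := Nat.find_spec hex
    set k₀ := Nat.find hex with hk₀def
    have hact : ∀ i, i ≤ k₀ → ¬ ω (extSeq false (initSeg α i)) < i :=
      fun i hi => hactive i (lt_of_le_of_lt hi hk0)
    obtain ⟨p, hsel, hpa, _⟩ :=
      unfold1 k₀ (tail k₀ fun i hi => hact i (le_of_lt hi)) (hact k₀ le_rfl)
    set s := initSeg α k₀ with hs
    set m := ω α - k₀ - 1 with hm
    have hDm : Depth c β s (m + 1) := by
      have e : ω α - k₀ = m + 1 := by omega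
      rwa [e] at hD
    have hNm : ¬ Depth c β (s ++ [α k₀]) m := by
      rw [initSeg_succ, ← hs] at hN
      exact hN
    cases hαk : α k₀ with
    | false =>
      rw [hαk] at hsel hpa hNm
      by_cases hC : Depth c β s (p false + 1) → Depth c β (s ++ [false]) (p false)
      · rw [hpa, hqα] at hC
        exact absurd (hC hDm) hNm
      · unfold wklSel at hsel
        rw [if_neg hC] at hsel
        exact absurd hsel (by simp)
    | true =>
      rw [hαk] at hsel hpa hNm
      by_cases hC : Depth c β s (p false + 1) → Depth c β (s ++ [false]) (p false)
      · unfold wklSel at hsel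
        rw [if_pos hC] at hsel
        exact absurd hsel (by simp)
      · push_neg at hC
        obtain ⟨hA, hB⟩ := hC
        rcases depth_succ_child hDm with h0 | h1
        · rcases le_or_gt (p false) m with hle | hlt
          · exact absurd (depth_mono hβ h0 hle) hB
          · rcases depth_succ_child hA with h0' | h1'
            · exact absurd h0' hB
            · exact absurd (depth_mono hβ h1' (by omega)) hNm
        · exact absurd h1 hNm
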